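/- arXiv:math/0512079 — 6 statements merged into one kernel-verified Lean document; each statement's English description precedes it below -/
import Mathlib

section
/- Let C be a hereditary abelian category with a tilting object T such that every object lies in Fac(T') for some tilting object T'. If an object X of C satisfies [X] = 0 in K_0(C), then X = 0. -/
/-!
Resolve a tilting object `T` with `X ∈ Fac T` by projectives `P`. As `C` is hereditary, the long
exact sequence of `Hom(P, -)` stops after `Ext¹`, so `Y ↦ dim Hom(T, Y) - dim Ext¹(T, Y)` is
additive on short exact sequences and factors through `K₀(C)`; it therefore vanishes at `X`.
Tilting gives `Ext¹(T, X) = 0`, hence `Hom(T, X) = 0`, and a quotient of `Tⁿ` admitting no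
nonzero map from `T` is zero.
-/

open CategoryTheory CategoryTheory.Limits Opposite

attribute [local instance] CategoryTheory.Abelian.hasFiniteBiproducts

noncomputable section

universe v u

variable (K : Type*) [Field K]
variable (C : Type u) [Category.{v} C] [Abelian C] [Linear K C] [EnoughProjectives C]

/-- The subgroup of relations defining the Grothendieck group. -/
def k0Rel : AddSubgroup (FreeAbelianGroup C) :=
  AddSubgroup.closure {x | ∃ S : ShortComplex C, S.ShortExact ∧
    x = FreeAbelianGroup.of S.X₂ - FreeAbelianGroup.of S.X₁ - FreeAbelianGroup.of S.X₃}

/-- The Grothendieck group `K₀(C)` of the abelian category `C`. -/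
def K0 : Type u := FreeAbelianGroup C ⧸ k0Rel C

instance : AddCommGroup (K0 C) :=
  inferInstanceAs (AddCommGroup (FreeAbelianGroup C ⧸ k0Rel C))

variable {C}

/-- The class (dimension type) of an object in `K₀(C)`. -/
def k0cls (X : C) : K0 C := QuotientAddGroup.mk (FreeAbelianGroup.of X)

/-- The first Ext space, as a `K`-module. -/
def ext1 (X Y : C) : ModuleCat K := ((Ext K C 1).obj (op X)).obj Y

/-- `X` is a quotient of a finite direct sum of copies of `T`. -/
def InFac (T X : C) : Prop :=
  ∃ (n : ℕ) (f : (⨁ fun _ : Fin n => T) ⟶ X), Epi f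

/-- `T` is a tilting object: `Fac T = {X | Ext¹(T,X) = 0}`. -/
def IsTilting (T : C) : Prop :=
  ∀ X : C, InFac T X ↔ IsZero (ext1 K T X)

lemma HomologicalComplex.finiteDimensional_homology {K : Type*} [Field K]
    {ι : Type*} {c : ComplexShape ι}
    (M : HomologicalComplex (ModuleCat K) c) (i : ι) [FiniteDimensional K (M.X i)] :
    FiniteDimensional K (M.homology i) :=
  have : FiniteDimensional K (M.cycles i) :=
    Module.Finite.of_injective (M.iCycles i).hom
      ((ModuleCat.mono_iff_injective _).1 inferInstance)
  Module.Finite.of_surjective (M.homologyπ i).hom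
    ((ModuleCat.epi_iff_surjective _).1 inferInstance)

lemma CochainComplex.mono_homologyMap_zero {C : Type*} [Category C] [HasZeroMorphisms C]
    {A B : CochainComplex C ℕ} (φ : A ⟶ B) [A.HasHomology 0] [B.HasHomology 0]
    [Mono (φ.f 0)] : Mono (HomologicalComplex.homologyMap φ 0) :=
  have : Mono (HomologicalComplex.homologyMap φ 0 ≫ B.isoHomologyπ₀.inv) := by
    rw [CochainComplex.isoHomologyπ₀_inv_naturality]
    infer_instance
  mono_of_mono _ B.isoHomologyπ₀.inv

section

variable {C : Type u} [Category.{v} C] [Abelian C]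

def K0.lift {G : Type*} [AddCommGroup G] (f : C → G)
    (hf : ∀ S : ShortComplex C, S.ShortExact → f S.X₂ = f S.X₁ + f S.X₃) : K0 C →+ G :=
  QuotientAddGroup.lift (k0Rel C) (FreeAbelianGroup.lift f) <| by
    rw [k0Rel, AddSubgroup.closure_le]
    rintro _ ⟨S, hS, rfl⟩
    simp [hf S hS]

@[simp]
lemma K0.lift_k0cls {G : Type*} [AddCommGroup G] (f : C → G)
    (hf : ∀ S : ShortComplex C, S.ShortExact → f S.X₂ = f S.X₁ + f S.X₃) (X : C) :
    K0.lift f hf (k0cls X) = f X :=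
  FreeAbelianGroup.lift_apply_of f X

end

namespace ChainComplex

variable {K : Type*} [Field K] {C : Type u} [Category.{v} C] [Abelian C] [Linear K C]

section

variable {α : Type*} [AddRightCancelSemigroup α] [One α]

def linearYonedaMap (P : ChainComplex C α) {Y Z : C} (h : Y ⟶ Z) :
    P.linearYonedaObj K Y ⟶ P.linearYonedaObj K Z where
  f n := ModuleCat.ofHom (Linear.rightComp K _ h)
  comm' i j _ := by
    ext g
    exact (Category.assoc _ _ _).symm

abbrev linearYonedaShortComplex (P : ChainComplex C α) (S : ShortComplex C) :
    ShortComplex (CochainComplex (ModuleCat K) α) where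
  f := P.linearYonedaMap S.f
  g := P.linearYonedaMap S.g
  zero := by
    ext n g
    exact (Category.assoc _ _ _).trans ((congrArg _ S.zero).trans comp_zero)

lemma shortExact_linearYonedaShortComplex (P : ChainComplex C α) [∀ n, Projective (P.X n)]
    {S : ShortComplex C} (hS : S.ShortExact) :
    (P.linearYonedaShortComplex (K := K) S).ShortExact := by
  refine HomologicalComplex.shortExact_of_degreewise_shortExact _ fun n => ?_
  have := hS.mono_f
  have := hS.epi_g
  refine .mk' ?_ ?_ ?_
  · refine (ShortComplex.moduleCat_exact_iff _).2 fun u (hu : u ≫ S.g = 0) => ?_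
    exact ⟨hS.exact.lift u hu, hS.exact.lift_f u hu⟩
  · exact (ModuleCat.mono_iff_injective _).2 fun a b hab => (cancel_mono S.f).1 hab
  · exact (ModuleCat.epi_iff_surjective _).2 fun u => Projective.factors (u : P.X n ⟶ S.X₃) S.g

end

variable (K) in
def eulerChar (P : ChainComplex C ℕ) (Y : C) : ℤ :=
  Module.finrank K ((P.linearYonedaObj K Y).homology 0) -
    Module.finrank K ((P.linearYonedaObj K Y).homology 1)

lemma eulerChar_shortExact (P : ChainComplex C ℕ) [∀ n, Projective (P.X n)]
    (hfin : ∀ n Y, FiniteDimensional K (P.X n ⟶ Y))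
    (h2 : ∀ Y, IsZero ((P.linearYonedaObj K Y).homology 2))
    {S : ShortComplex C} (hS : S.ShortExact) :
    P.eulerChar K S.X₂ = P.eulerChar K S.X₁ + P.eulerChar K S.X₃ := by
  have hE := P.shortExact_linearYonedaShortComplex (K := K) hS
  have (n : ℕ) (Y : C) : FiniteDimensional K ((P.linearYonedaObj K Y).homology n) :=
    have : FiniteDimensional K ((P.linearYonedaObj K Y).X n) := hfin n Y
    HomologicalComplex.finiteDimensional_homology _ n
  have := hE.mono_f
  have hinj := (ModuleCat.mono_iff_injective _).1
    (CochainComplex.mono_homologyMap_zero (P.linearYonedaShortComplex (K := K) S).f)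
  have hsurj := (ModuleCat.epi_iff_surjective _).1
    ((hE.homology_exact₃ 1 2 rfl).epi_f ((h2 S.X₁).eq_of_tgt _ _))
  have key := Module.sum_neg_one_pow_finrank_eq_zero_of_exact_six _ _ _ _ _ hinj
    ((ShortComplex.ShortExact.moduleCat_exact_iff_function_exact _).1 (hE.homology_exact₂ 0))
    ((ShortComplex.ShortExact.moduleCat_exact_iff_function_exact _).1
      (hE.homology_exact₃ 0 1 rfl))
    ((ShortComplex.ShortExact.moduleCat_exact_iff_function_exact _).1
      (hE.homology_exact₁ 0 1 rfl))
    ((ShortComplex.ShortExact.moduleCat_exact_iff_function_exact _).1 (hE.homology_exact₂ 1))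
    hsurj
  simp only [eulerChar]
  linarith

lemma isZero_homology_zero_of_eulerChar_eq_zero (P : ChainComplex C ℕ) {X : C}
    [FiniteDimensional K ((P.linearYonedaObj K X).homology 0)] (hχ : P.eulerChar K X = 0)
    (h1 : IsZero ((P.linearYonedaObj K X).homology 1)) :
    IsZero ((P.linearYonedaObj K X).homology 0) := by
  have := ModuleCat.subsingleton_of_isZero h1
  have h1' : Module.finrank K ((P.linearYonedaObj K X).homology 1) = 0 :=
    Module.finrank_zero_of_subsingleton
  have : Subsingleton ((P.linearYonedaObj K X).homology 0) :=
    Module.finrank_zero_iff.1 (by simpa [eulerChar, h1'] using hχ)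
  exact ModuleCat.isZero_of_subsingleton _

end ChainComplex

namespace CategoryTheory.ProjectiveResolution

variable {K : Type*} [Field K] {C : Type u} [Category.{v} C] [Abelian C] [Linear K C]

lemma eq_zero_of_isZero_homology_zero {T X : C} (P : ProjectiveResolution T)
    (h : IsZero ((P.complex.linearYonedaObj K X).homology 0)) (g : T ⟶ X) : g = 0 := by
  let M := P.complex.linearYonedaObj K X
  -- `g ↦ π₀ ≫ g` lands in the `0`-cocycles, i.e. in `H⁰`, and is injective as `π₀` is epi.
  let restrict : ModuleCat.of K (T ⟶ X) ⟶ M.X 0 :=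
    ModuleCat.ofHom (Linear.leftComp K X (P.π.f 0))
  have hcocycle : restrict ≫ M.d 0 1 = 0 := by
    ext u
    exact (Category.assoc _ _ _).symm.trans
      ((congrArg (· ≫ u) P.complex_d_comp_π_f_zero).trans zero_comp)
  have hlift := M.liftCycles_i restrict 1 (by simp) hcocycle
  rw [(h.of_iso M.isoHomologyπ₀).eq_of_tgt (M.liftCycles restrict 1 _ hcocycle) 0,
    zero_comp] at hlift
  exact zero_of_epi_comp (P.π.f 0) (congrArg (fun φ => φ.hom g) hlift).symm

end CategoryTheory.ProjectiveResolution

lemma isZero_of_inFac_of_forall_eq_zero {C : Type u} [Category.{v} C] [Abelian C] {T X : C}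
    (hTX : InFac T X) (h : ∀ g : T ⟶ X, g = 0) : IsZero X := by
  obtain ⟨n, f, hf⟩ := hTX
  have hf0 : f = 0 := biproduct.hom_ext' _ _ fun _ => (h _).trans comp_zero.symm
  rw [IsZero.iff_id_eq_zero, ← cancel_epi f, hf0, zero_comp, zero_comp]

theorem isZero_of_k0cls_eq_zero
    (hHomFin : ∀ X Y : C, FiniteDimensional K (X ⟶ Y))
    (hHereditary : ∀ (X Y : C) (n : ℕ), 2 ≤ n →
      IsZero (((Ext K C n).obj (op X)).obj Y))
    (hT : ∀ X : C, ∃ T : C, IsTilting K T ∧ InFac T X)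
    (X : C) (hX : k0cls X = (0 : K0 C)) :
    IsZero X := by
  obtain ⟨T, hTilt, hTX⟩ := hT X
  let P : ProjectiveResolution T := projectiveResolution T
  let M := P.complex.linearYonedaObj K X
  have : FiniteDimensional K (M.X 0) := hHomFin _ X
  have := M.finiteDimensional_homology 0
  have hχ : P.complex.eulerChar K X = 0 := by
    rw [← K0.lift_k0cls _ (fun _ => P.complex.eulerChar_shortExact (fun n Y => hHomFin _ Y)
      fun Y => (hHereditary T Y 2 le_rfl).of_iso (P.isoExt 2 Y).symm), hX, map_zero]
  have hH1 : IsZero (M.homology 1) := ((hTilt X).1 hTX).of_iso (P.isoExt 1 X).symm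
  have hH0 : IsZero (M.homology 0) := P.complex.isZero_homology_zero_of_eulerChar_eq_zero hχ hH1
  exact isZero_of_inFac_of_forall_eq_zero hTX (P.eq_zero_of_isZero_homology_zero hH0)

end
end

section
/- In an abelian category, suppose given a commutative square g∘θ = φ∘f where θ: A' → A'' and φ: B' → B'' are monomorphisms with cokernel projections p_θ: A'' → Coker θ and p_φ: B'' → Coker φ, and let h: Coker θ → Coker φ be the induced morphism on cokernels. Then there is an exact sequence 0 → Ker(h∘p_θ) → A'' ⊕ B' → B'' → Coker h → 0, where the middle map is (g, φ). -/
/-!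
STATEMENT 4: Given a commutative square `θ ≫ g = f ≫ φ` in an abelian category, with
`θ : A' ⟶ A''` and `φ : B' ⟶ B''` monomorphisms and `h : Coker θ ⟶ Coker φ` the induced
morphism on cokernels, there is an exact sequence
`0 → Ker(h ∘ p_θ) → A'' ⊕ B' → B'' → Coker h → 0`, where the middle map is `(g, φ)`.
-/

open CategoryTheory CategoryTheory.Limits

noncomputable section

universe v u

variable {C : Type u} [Category.{v} C] [Abelian C]

/-- The morphism induced on cokernels by a commutative square. -/
def inducedCokerMap {A' A'' B' B'' : C} (θ : A' ⟶ A'') (φ : B' ⟶ B'')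
    (f : A' ⟶ B') (g : A'' ⟶ B'') (w : θ ≫ g = f ≫ φ) :
    cokernel θ ⟶ cokernel φ :=
  cokernel.desc θ (g ≫ cokernel.π φ) (by
    rw [← Category.assoc, w, Category.assoc, cokernel.condition, comp_zero])

theorem four_term_exact_sequence
    {A' A'' B' B'' : C} (θ : A' ⟶ A'') (φ : B' ⟶ B'')
    (f : A' ⟶ B') (g : A'' ⟶ B'') (hθ : Mono θ) (hφ : Mono φ)
    (w : θ ≫ g = f ≫ φ) :
    letI h := inducedCokerMap θ φ f g w
    ∃ (m : kernel (cokernel.π θ ≫ h) ⟶ B')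
      (_ : m ≫ φ = kernel.ι (cokernel.π θ ≫ h) ≫ g),
      Mono (biprod.lift (kernel.ι (cokernel.π θ ≫ h)) (-m)) ∧
      (∃ w₁ : biprod.lift (kernel.ι (cokernel.π θ ≫ h)) (-m) ≫ biprod.desc g φ = 0,
        (ShortComplex.mk _ _ w₁).Exact) ∧
      Epi (cokernel.π φ ≫ cokernel.π h) ∧
      (∃ w₂ : biprod.desc g φ ≫ (cokernel.π φ ≫ cokernel.π h) = 0,
        (ShortComplex.mk _ _ w₂).Exact) := by
  set h := inducedCokerMap θ φ f g w with hdef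
  have e : cokernel.π θ ≫ h = g ≫ cokernel.π φ := cokernel.π_desc _ _ _
  set ι := kernel.ι (cokernel.π θ ≫ h) with hι
  have hιg : (ι ≫ g) ≫ cokernel.π φ = 0 := by
    rw [Category.assoc, ← e, kernel.condition]
  refine ⟨Abelian.monoLift φ (ι ≫ g) hιg, Abelian.monoLift_comp φ (ι ≫ g) hιg, ?_, ?_, ?_, ?_⟩
  · set m := Abelian.monoLift φ (ι ≫ g) hιg
    have : biprod.lift ι (-m) ≫ biprod.fst = ι := biprod.lift_fst _ _
    have : Mono (biprod.lift ι (-m) ≫ biprod.fst) := by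
      rw [this]; infer_instance
    exact mono_of_mono _ biprod.fst
  · set m := Abelian.monoLift φ (ι ≫ g) hιg with hm
    have hmφ : m ≫ φ = ι ≫ g := Abelian.monoLift_comp φ (ι ≫ g) hιg
    have w₁ : biprod.lift ι (-m) ≫ biprod.desc g φ = 0 := by
      rw [biprod.lift_desc, Preadditive.neg_comp, hmφ, add_neg_cancel]
    refine ⟨w₁, ShortComplex.exact_of_f_is_kernel _ ?_⟩
    have hmono : Mono (biprod.lift ι (-m)) := by
      have h1 : biprod.lift ι (-m) ≫ biprod.fst = ι := biprod.lift_fst _ _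
      have : Mono (biprod.lift ι (-m) ≫ biprod.fst) := by rw [h1]; infer_instance
      exact mono_of_mono _ biprod.fst
    refine KernelFork.IsLimit.ofι' _ _ ?_
    dsimp only
    intro T x hx2
    have hdesc : biprod.desc g φ = biprod.fst ≫ g + biprod.snd ≫ φ := by
      ext <;> simp
    have hx' : (x ≫ biprod.fst) ≫ g + (x ≫ biprod.snd) ≫ φ = 0 := by
      simp only [hdesc, Preadditive.comp_add, ← Category.assoc] at hx2
      exact hx2
    have hfg : (x ≫ biprod.fst) ≫ g = -((x ≫ biprod.snd) ≫ φ) := by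
      rw [eq_neg_iff_add_eq_zero]; exact hx'
    have hxk0 : (x ≫ biprod.fst) ≫ (g ≫ cokernel.π φ) = 0 := by
      rw [← Category.assoc, hfg, Preadditive.neg_comp, Category.assoc, cokernel.condition,
        comp_zero, neg_zero]
    rw [← e] at hxk0
    refine ⟨kernel.lift _ (x ≫ biprod.fst) hxk0, ?_⟩
    have hli : kernel.lift _ (x ≫ biprod.fst) hxk0 ≫ ι = x ≫ biprod.fst :=
      kernel.lift_ι _ _ _
    apply biprod.hom_ext
    · rw [Category.assoc, biprod.lift_fst, hli]
    · rw [Category.assoc, biprod.lift_snd, ← cancel_mono φ, Preadditive.comp_neg,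
        Preadditive.neg_comp, Category.assoc, hmφ, ← Category.assoc, hli]
      rw [hfg, neg_neg]
  · have : Epi (cokernel.π φ) := inferInstance
    have : Epi (cokernel.π h) := inferInstance
    exact epi_comp _ _
  · have w₂ : biprod.desc g φ ≫ (cokernel.π φ ≫ cokernel.π h) = 0 := by
      apply biprod.hom_ext'
      · rw [← Category.assoc, biprod.inl_desc, ← Category.assoc, ← e, Category.assoc,
          cokernel.condition, comp_zero, comp_zero]
      · rw [← Category.assoc, biprod.inr_desc, ← Category.assoc, cokernel.condition,
          zero_comp, comp_zero]
    refine ⟨w₂, ShortComplex.exact_of_g_is_cokernel _ ?_⟩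
    have : Epi (cokernel.π φ ≫ cokernel.π h) := epi_comp _ _
    refine CokernelCofork.IsColimit.ofπ' _ _ ?_
    dsimp only
    intro T y hy2
    have hgy : g ≫ y = 0 := by
      have := biprod.inl ≫= hy2
      simpa using this
    have hφy : φ ≫ y = 0 := by
      have := biprod.inr ≫= hy2
      simpa using this
    have hy' : cokernel.π φ ≫ cokernel.desc φ y hφy = y := cokernel.π_desc _ _ _
    have hhy' : h ≫ cokernel.desc φ y hφy = 0 := by
      rw [← cancel_epi (cokernel.π θ), ← Category.assoc, e, Category.assoc, hy', hgy,
        comp_zero]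
    refine ⟨cokernel.desc h (cokernel.desc φ y hφy) hhy', ?_⟩
    rw [Category.assoc, cokernel.π_desc, hy']

end
end

section
/- In an abelian category, with notation as in the previous square (monomorphisms θ: A' → A'', φ: B' → B'', morphisms f,g with gθ = φf, and induced morphism h on cokernels), there is a short exact sequence 0 → A' → Ker(h∘p_θ) → Ker h → 0. -/
/-!
STATEMENT 5: With a commutative square `θ ≫ g = f ≫ φ` in an abelian category where
`θ, φ` are monomorphisms and `h : Coker θ ⟶ Coker φ` is the induced map on cokernels,
there is a short exact sequence `0 → A' → Ker(h ∘ p_θ) → Ker h → 0`, where the first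
map is induced by `θ` and the second by `p_θ`.
-/

open CategoryTheory CategoryTheory.Limits

noncomputable section

universe v u

variable {C : Type u} [Category.{v} C] [Abelian C]

/-!
Let `p = cokernel.π θ`. The square with sides `q`, `kernel.ι h`, `kernel.ι (p ≫ h)` and `p` is a
pullback. In an abelian category the pullback of the epimorphism `p` is an epimorphism, so `q` is
epi; and in a pullback square a kernel of the bottom map lifts to a kernel of the top map, so
`A' = ker p` is the kernel of `q`.
-/

namespace CategoryTheory.Limits

variable {D : Type*} [Category D] [HasZeroMorphisms D]

lemma isPullback_kernel_ι_comp {X Y Z : D} (p : X ⟶ Y) (h : Y ⟶ Z)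
    [HasKernel (p ≫ h)] [HasKernel h] :
    IsPullback (kernel.lift h (kernel.ι (p ≫ h) ≫ p) (by simp)) (kernel.ι (p ≫ h))
      (kernel.ι h) p :=
  IsPullback.of_isLimit' ⟨by simp⟩ <| PullbackCone.IsLimit.mk _
    (fun s ↦ kernel.lift _ s.snd (by rw [← Category.assoc, ← s.condition]; simp))
    (fun s ↦ by ext; simp [s.condition])
    (fun s ↦ by simp)
    (fun s m _ hm ↦ by ext; simpa using hm)

end CategoryTheory.Limits

namespace CategoryTheory.IsPullback

open Limits

variable {D : Type*} [Category D] [HasZeroMorphisms D]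
variable {X₁ X₂ X₃ X₄ : D} {t : X₁ ⟶ X₂} {l : X₁ ⟶ X₃} {r : X₂ ⟶ X₄} {b : X₃ ⟶ X₄}

def isLimitKernelForkOfIsLimit (sq : IsPullback t l r b) {K : D} {ι : K ⟶ X₃}
    {w : ι ≫ b = 0} (hι : IsLimit (KernelFork.ofι ι w)) (i : K ⟶ X₁) (hil : i ≫ l = ι)
    (hit : i ≫ t = 0) : IsLimit (KernelFork.ofι i hit) :=
  KernelFork.IsLimit.ofι _ _
    (fun k hk ↦ (lift k hk).1)
    (fun k hk ↦ sq.hom_ext (by simp [hk, hit]) (by simp [hil, (lift k hk).2]))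
    (fun k hk m hm ↦ Fork.IsLimit.hom_ext hι (by simp [← hm, hil, (lift k hk).2]))
where
  lift {T : D} (k : T ⟶ X₁) (hk : k ≫ t = 0) : { m : T ⟶ K // m ≫ ι = k ≫ l } :=
    KernelFork.IsLimit.lift' hι (k ≫ l)
      (by rw [Category.assoc, ← sq.w, reassoc_of% hk, zero_comp])

end CategoryTheory.IsPullback

namespace CategoryTheory.ShortComplex

def kernelCompSequence (S : ShortComplex C) {D : C} (h : S.X₃ ⟶ D) : ShortComplex C where
  X₁ := S.X₁
  X₂ := kernel (S.g ≫ h)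
  X₃ := kernel h
  f := kernel.lift _ S.f (by simp)
  g := kernel.lift h (kernel.ι (S.g ≫ h) ≫ S.g) (by simp)
  zero := by ext; simp

theorem ShortExact.kernelCompSequence {S : ShortComplex C} (hS : S.ShortExact) {D : C}
    (h : S.X₃ ⟶ D) :
    (S.kernelCompSequence h).ShortExact := by
  have : Mono S.f := hS.mono_f
  have : Epi S.g := hS.epi_g
  have sq := Limits.isPullback_kernel_ι_comp S.g h
  have hf : Mono (kernel.lift (S.g ≫ h) S.f (by simp)) := mono_of_mono_fac (kernel.lift_ι _ _ _)
  refine .mk' ?_ hf (Abelian.epi_fst_of_isLimit _ _ sq.isLimit)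
  exact exact_of_f_is_kernel _
    (sq.isLimitKernelForkOfIsLimit hS.exact.fIsKernel _ (kernel.lift_ι _ _ _) _)

end CategoryTheory.ShortComplex

theorem kernel_short_exact_sequence
    {A' A'' B' B'' : C} (θ : A' ⟶ A'') (φ : B' ⟶ B'')
    (f : A' ⟶ B') (g : A'' ⟶ B'') (hθ : Mono θ)
    (w : θ ≫ g = f ≫ φ) :
    letI h := inducedCokerMap θ φ f g w
    letI i : A' ⟶ kernel (cokernel.π θ ≫ h) :=
      kernel.lift _ θ (by rw [← Category.assoc, cokernel.condition, zero_comp])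
    letI q : kernel (cokernel.π θ ≫ h) ⟶ kernel h :=
      kernel.lift _ (kernel.ι (cokernel.π θ ≫ h) ≫ cokernel.π θ)
        (by rw [Category.assoc, kernel.condition])
    ∃ wiq : i ≫ q = 0,
      Mono i ∧ Epi q ∧ (ShortComplex.mk i q wiq).Exact := by
  have hS : (ShortComplex.mk θ (cokernel.π θ) (cokernel.condition θ)).ShortExact :=
    { exact := ShortComplex.exact_cokernel θ }
  have hK := hS.kernelCompSequence (inducedCokerMap θ φ f g w)
  exact ⟨_, hK.mono_f, hK.epi_g, hK.exact⟩

end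
end

section
/- Let C be a hereditary abelian K-category with finite dimensional Hom and Ext spaces. Let X₁,…,X_m be objects with Ext^1(X_i,X_j) ≠ 0 for some i ≠ j, and let 0 → X_j → E → X_i → 0 be a nonsplit extension. Then dim End(E ⊕ ⨁_{k≠i,j} X_k) < dim End(⨁_{k=1}^m X_k). -/
/-!
STATEMENT 6: In a hereditary abelian `K`-category with finite dimensional Hom and Ext
spaces, let `X₁, …, X_m` be objects with `Ext¹(X_i, X_j) ≠ 0` for some `i ≠ j`, and let
`0 → X_j → E → X_i → 0` be a nonsplit extension.  Then
`dim End (E ⊕ ⨁_{k ≠ i,j} X_k) < dim End (⨁_{k=1}^m X_k)`.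
-/

open CategoryTheory CategoryTheory.Limits Opposite

attribute [local instance] CategoryTheory.Abelian.hasFiniteBiproducts

noncomputable section

universe v u

variable (K : Type*) [Field K]
variable {C : Type u} [Category.{v} C] [Abelian C] [Linear K C] [EnoughProjectives C]

/-
Write `A = X j`, `B = X i` and `R = ⨁_{k ≠ i, j} X k`. Both endomorphism spaces split into blocks
`Hom(P, Q)` between summands, and the two sides share the block `End R`. Left exactness of
`Hom(Y, -)` and `Hom(-, Y)` on `0 → A → E → B → 0` bounds each block involving `E` by the sum of
the corresponding blocks for `A` and `B`. The bound for `Hom(E, A)` is strict: its image in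
`End A` under restriction along `A → E` misses `𝟙 A` since the extension does not split.
-/

open Module

namespace LinearMap

variable {𝕜 U V W : Type*} [DivisionRing 𝕜] [AddCommGroup U] [Module 𝕜 U] [AddCommGroup V]
  [Module 𝕜 V] [AddCommGroup W] [Module 𝕜 W] [FiniteDimensional 𝕜 U] [FiniteDimensional 𝕜 V]

theorem finrank_le_finrank_add_finrank_range_of_ker_le_range (f : U →ₗ[𝕜] V) (g : V →ₗ[𝕜] W)
    (h : ker g ≤ range f) : finrank 𝕜 V ≤ finrank 𝕜 U + finrank 𝕜 (range g) :=
  calc finrank 𝕜 V = finrank 𝕜 (range g) + finrank 𝕜 (ker g) :=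
        (finrank_range_add_finrank_ker g).symm
    _ ≤ finrank 𝕜 (range g) + finrank 𝕜 (range f) := by gcongr; exact Submodule.finrank_mono h
    _ ≤ finrank 𝕜 U + finrank 𝕜 (range g) := by rw [add_comm]; gcongr; exact finrank_range_le f

end LinearMap

theorem Fintype.sum_eq_add_add_sum_subtype_ne_and_ne {ι M : Type*} [Fintype ι] [DecidableEq ι]
    [AddCommMonoid M] (g : ι → M) {i j : ι} (hij : i ≠ j) :
    ∑ k, g k = g i + g j + ∑ k : {k // k ≠ i ∧ k ≠ j}, g k := by
  rw [← Finset.add_sum_erase _ _ (Finset.mem_univ i),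
    ← Finset.add_sum_erase _ _ (Finset.mem_erase.2 ⟨hij.symm, Finset.mem_univ j⟩), ← add_assoc,
    Finset.sum_subtype (p := fun k => k ≠ i ∧ k ≠ j) _ fun k => by simp [and_comm]]

variable {D : Type*} [Category D] [Preadditive D] [Linear K D]

namespace CategoryTheory.Limits

section

variable [HasBinaryBiproducts D]

def biprod.descLinearEquiv (A B Y : D) : ((A ⟶ Y) × (B ⟶ Y)) ≃ₗ[K] (A ⊞ B ⟶ Y) where
  toFun p := biprod.desc p.1 p.2
  invFun f := (biprod.inl ≫ f, biprod.inr ≫ f)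
  map_add' p q := by ext <;> simp
  map_smul' c p := by ext <;> simp
  left_inv p := by simp
  right_inv f := by ext <;> simp

def biprod.liftLinearEquiv (A B Y : D) : ((Y ⟶ A) × (Y ⟶ B)) ≃ₗ[K] (Y ⟶ A ⊞ B) where
  toFun p := biprod.lift p.1 p.2
  invFun f := (f ≫ biprod.fst, f ≫ biprod.snd)
  map_add' p q := by ext <;> simp
  map_smul' c p := by ext <;> simp
  left_inv p := by simp
  right_inv f := by ext <;> simp

end

section

variable {ι : Type*} [Fintype ι] (X : ι → D) [HasBiproduct X]

def biproduct.descLinearEquiv (Y : D) : (∀ k, X k ⟶ Y) ≃ₗ[K] (⨁ X ⟶ Y) where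
  toFun := biproduct.desc
  invFun f k := biproduct.ι X k ≫ f
  map_add' p q := by ext; simp
  map_smul' c p := by ext; simp
  left_inv p := by ext; simp
  right_inv f := by ext; simp

def biproduct.liftLinearEquiv (Y : D) : (∀ k, Y ⟶ X k) ≃ₗ[K] (Y ⟶ ⨁ X) where
  toFun := biproduct.lift
  invFun f k := f ≫ biproduct.π X k
  map_add' p q := by ext; simp
  map_smul' c p := by ext; simp
  left_inv p := by ext; simp
  right_inv f := by ext; simp

end

end CategoryTheory.Limits

variable [∀ X Y : D, FiniteDimensional K (X ⟶ Y)]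

namespace CategoryTheory.Limits

section

variable [HasBinaryBiproducts D]

theorem finrank_biprod_hom (A B Y : D) :
    finrank K (A ⊞ B ⟶ Y) = finrank K (A ⟶ Y) + finrank K (B ⟶ Y) := by
  rw [← (biprod.descLinearEquiv K A B Y).finrank_eq, finrank_prod]

theorem finrank_hom_biprod (A B Y : D) :
    finrank K (Y ⟶ A ⊞ B) = finrank K (Y ⟶ A) + finrank K (Y ⟶ B) := by
  rw [← (biprod.liftLinearEquiv K A B Y).finrank_eq, finrank_prod]

theorem finrank_end_biprod (A B : D) :
    finrank K (A ⊞ B ⟶ A ⊞ B) = finrank K (A ⟶ A) + finrank K (A ⟶ B) +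
      finrank K (B ⟶ A) + finrank K (B ⟶ B) := by
  rw [finrank_biprod_hom, finrank_hom_biprod, finrank_hom_biprod, ← add_assoc]

end

section

variable {ι : Type*} [Fintype ι] (X : ι → D) [HasBiproduct X]

theorem finrank_biproduct_hom (Y : D) : finrank K (⨁ X ⟶ Y) = ∑ k, finrank K (X k ⟶ Y) := by
  rw [← (biproduct.descLinearEquiv K X Y).finrank_eq, finrank_pi_fintype]

theorem finrank_hom_biproduct (Y : D) : finrank K (Y ⟶ ⨁ X) = ∑ k, finrank K (Y ⟶ X k) := by
  rw [← (biproduct.liftLinearEquiv K X Y).finrank_eq, finrank_pi_fintype]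

end

theorem finrank_end_biproduct_of_ne {ι : Type*} [Fintype ι] [DecidableEq ι] (X : ι → D)
    [HasBiproduct X] {i j : ι} (hij : i ≠ j)
    [HasBiproduct fun k : {k // k ≠ i ∧ k ≠ j} => X k] :
    finrank K (⨁ X ⟶ ⨁ X) =
      finrank K (X i ⟶ X i) + finrank K (X i ⟶ X j) + finrank K (X j ⟶ X i) +
        finrank K (X j ⟶ X j) +
      (finrank K (X i ⟶ ⨁ fun k : {k // k ≠ i ∧ k ≠ j} => X k) +
        finrank K (X j ⟶ ⨁ fun k : {k // k ≠ i ∧ k ≠ j} => X k)) +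
      (finrank K ((⨁ fun k : {k // k ≠ i ∧ k ≠ j} => X k) ⟶ X i) +
        finrank K ((⨁ fun k : {k // k ≠ i ∧ k ≠ j} => X k) ⟶ X j)) +
      finrank K ((⨁ fun k : {k // k ≠ i ∧ k ≠ j} => X k) ⟶
        ⨁ fun k : {k // k ≠ i ∧ k ≠ j} => X k) := by
  simp only [finrank_biproduct_hom, finrank_hom_biproduct,
    Fintype.sum_eq_add_add_sum_subtype_ne_and_ne _ hij, Finset.sum_add_distrib]
  ring

end CategoryTheory.Limits

namespace CategoryTheory.ShortComplex.Exact

variable [Balanced D] {S : ShortComplex D}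

theorem finrank_hom_to_X₂_le (hS : S.Exact) [Mono S.f] (Y : D) :
    finrank K (Y ⟶ S.X₂) ≤ finrank K (Y ⟶ S.X₁) + finrank K (Y ⟶ S.X₃) :=
  calc finrank K (Y ⟶ S.X₂)
      ≤ finrank K (Y ⟶ S.X₁) + finrank K (LinearMap.range (Linear.rightComp K Y S.g)) :=
        LinearMap.finrank_le_finrank_add_finrank_range_of_ker_le_range
          (Linear.rightComp K Y S.f) _ fun k hk => hS.lift' k hk
    _ ≤ finrank K (Y ⟶ S.X₁) + finrank K (Y ⟶ S.X₃) := by gcongr; exact Submodule.finrank_le _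

variable [Epi S.g]

theorem finrank_hom_from_X₂_le_finrank_add_finrank_range (hS : S.Exact) (Y : D) :
    finrank K (S.X₂ ⟶ Y) ≤
      finrank K (S.X₃ ⟶ Y) + finrank K (LinearMap.range (Linear.leftComp K Y S.f)) :=
  LinearMap.finrank_le_finrank_add_finrank_range_of_ker_le_range (Linear.leftComp K Y S.g) _
    fun k hk => hS.desc' k hk

theorem finrank_hom_from_X₂_le (hS : S.Exact) (Y : D) :
    finrank K (S.X₂ ⟶ Y) ≤ finrank K (S.X₁ ⟶ Y) + finrank K (S.X₃ ⟶ Y) := by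
  have := hS.finrank_hom_from_X₂_le_finrank_add_finrank_range K Y
  have := (LinearMap.range (Linear.leftComp K Y S.f)).finrank_le
  omega

theorem finrank_hom_from_X₂_lt (hS : S.Exact)
    (hnonsplit : ¬ ∃ r : S.X₂ ⟶ S.X₁, S.f ≫ r = 𝟙 S.X₁) :
    finrank K (S.X₂ ⟶ S.X₁) < finrank K (S.X₁ ⟶ S.X₁) + finrank K (S.X₃ ⟶ S.X₁) := by
  have hid : LinearMap.range (Linear.leftComp K S.X₁ S.f) ≠ ⊤ := fun htop =>
    hnonsplit (htop ▸ Submodule.mem_top : 𝟙 S.X₁ ∈ LinearMap.range (Linear.leftComp K S.X₁ S.f))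
  have := hS.finrank_hom_from_X₂_le_finrank_add_finrank_range K S.X₁
  have := Submodule.finrank_lt hid
  omega

theorem finrank_end_X₂_lt (hS : S.Exact) [Mono S.f]
    (hnonsplit : ¬ ∃ r : S.X₂ ⟶ S.X₁, S.f ≫ r = 𝟙 S.X₁) :
    finrank K (S.X₂ ⟶ S.X₂) < finrank K (S.X₁ ⟶ S.X₁) + finrank K (S.X₁ ⟶ S.X₃) +
      finrank K (S.X₃ ⟶ S.X₁) + finrank K (S.X₃ ⟶ S.X₃) := by
  have := hS.finrank_hom_to_X₂_le K S.X₂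
  have := hS.finrank_hom_from_X₂_lt K hnonsplit
  have := hS.finrank_hom_from_X₂_le K S.X₃
  omega

end CategoryTheory.ShortComplex.Exact

theorem end_dim_lt_of_nonsplit_extension
    (hHomFin : ∀ X Y : C, FiniteDimensional K (X ⟶ Y))
    (m : ℕ) (X : Fin m → C) (i j : Fin m) (hij : i ≠ j)
    (E : C) (ι : X j ⟶ E) (π : E ⟶ X i) (w : ι ≫ π = 0)
    (hmono : Mono ι) (hepi : Epi π) (hexact : (ShortComplex.mk ι π w).Exact)
    (hnonsplit : ¬ ∃ r : E ⟶ X j, ι ≫ r = 𝟙 (X j)) :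
    Module.finrank K
        ((E ⊞ ⨁ fun k : {k : Fin m // k ≠ i ∧ k ≠ j} => X k) ⟶
          (E ⊞ ⨁ fun k : {k : Fin m // k ≠ i ∧ k ≠ j} => X k))
      < Module.finrank K ((⨁ X) ⟶ (⨁ X)) := by
  rw [finrank_end_biprod, finrank_end_biproduct_of_ne K X hij]
  set R := ⨁ fun k : {k : Fin m // k ≠ i ∧ k ≠ j} => X k
  have hEE := hexact.finrank_end_X₂_lt K hnonsplit
  have hER := hexact.finrank_hom_from_X₂_le K R
  have hRE := hexact.finrank_hom_to_X₂_le K R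
  dsimp only at hEE hER hRE
  omega

end
end

section
/- Let p₀,…,p_n ≥ 1 and consider the lattice K with ℤ-basis α_*, α_{ij} (0 ≤ i ≤ n, 1 ≤ j ≤ pᵢ-1) and δ, with bilinear form ⟨α,β⟩ = m_*m'_* + m_*d' - d m'_* + Σᵢ Σⱼ m_{ij}(m'_{ij} - m'_{i,j-1}) (convention m'_{i0} = m'_*), for α = m_*α_* + Σ m_{ij}α_{ij} + dδ and β likewise with primes. Then an element α with m_* = 0 is a nonnegative integer combination of δ, the α_{ij}, and the elements δ - Σ_{j=1}^{pᵢ-1} α_{ij} (for each i) if and only if d ≥ Σᵢ₌₀ⁿ max{0, -m_{ij} : 1 ≤ j ≤ pᵢ-1}. -/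
/-!
STATEMENT 9: In the lattice with ℤ-basis `α_*`, `α_{ij}` (0 ≤ i ≤ n, 1 ≤ j ≤ pᵢ-1) and
`δ`, an element `α` with `m_* = 0` is a nonnegative integer combination of `δ`, the
`α_{ij}` and the elements `δ - Σ_{j} α_{ij}` if and only if
`d ≥ Σᵢ max{0, -m_{ij} : 1 ≤ j ≤ pᵢ-1}`.
(The index `j : Fin (pᵢ - 1)` stands for the actual index `j+1`.)
-/

noncomputable section

/-- The lattice `K₀`, presented by coefficients `(m_*, (m_{ij}), d)`. -/
def Klat (n : ℕ) (p : Fin (n + 1) → ℕ) : Type :=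
  ℤ × ((i : Fin (n + 1)) → Fin (p i - 1) → ℤ) × ℤ

instance (n : ℕ) (p : Fin (n + 1) → ℕ) : AddCommGroup (Klat n p) :=
  inferInstanceAs (AddCommGroup (ℤ × ((i : Fin (n + 1)) → Fin (p i - 1) → ℤ) × ℤ))

/-- The basis element `δ`. -/
def Kdelta (n : ℕ) (p : Fin (n + 1) → ℕ) : Klat n p := (0, 0, 1)

/-- The basis element `α_{ij}`. -/
def KA (n : ℕ) (p : Fin (n + 1) → ℕ) (i : Fin (n + 1)) (j : Fin (p i - 1)) : Klat n p :=
  (0, Pi.single i (Pi.single j 1), 0)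

def pr1 (n : ℕ) (p : Fin (n + 1) → ℕ) : Klat n p →+ ℤ where
  toFun x := x.1
  map_zero' := rfl
  map_add' _ _ := rfl

def pr2 (n : ℕ) (p : Fin (n + 1) → ℕ) (i : Fin (n + 1)) (j : Fin (p i - 1)) :
    Klat n p →+ ℤ where
  toFun x := x.2.1 i j
  map_zero' := rfl
  map_add' _ _ := rfl

def pr3 (n : ℕ) (p : Fin (n + 1) → ℕ) : Klat n p →+ ℤ where
  toFun x := x.2.2
  map_zero' := rfl
  map_add' _ _ := rfl

@[simp] lemma pr1_smul (n p) (c : ℤ) (x : Klat n p) :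
    pr1 n p (c • x) = c * pr1 n p x := by
  show c • x.1 = _; rw [smul_eq_mul]; rfl

@[simp] lemma pr2_smul (n p i j) (c : ℤ) (x : Klat n p) :
    pr2 n p i j (c • x) = c * pr2 n p i j x := by
  show c • x.2.1 i j = _; rw [smul_eq_mul]; rfl

@[simp] lemma pr3_smul (n p) (c : ℤ) (x : Klat n p) :
    pr3 n p (c • x) = c * pr3 n p x := by
  show c • x.2.2 = _; rw [smul_eq_mul]; rfl

@[simp] lemma pr1_delta (n p) : pr1 n p (Kdelta n p) = 0 := rfl
@[simp] lemma pr1_KA (n p i j) : pr1 n p (KA n p i j) = 0 := rfl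
@[simp] lemma pr3_delta (n p) : pr3 n p (Kdelta n p) = 1 := rfl
@[simp] lemma pr3_KA (n p i j) : pr3 n p (KA n p i j) = 0 := rfl
@[simp] lemma pr2_delta (n p i j) : pr2 n p i j (Kdelta n p) = 0 := rfl

lemma pr2_KA (n p) (i i' : Fin (n+1)) (j : Fin (p i - 1)) (j' : Fin (p i' - 1)) :
    pr2 n p i j (KA n p i' j') = if h : i = i' then (if (h ▸ j) = j' then 1 else 0) else 0 := by
  show (KA n p i' j').2.1 i j = _
  unfold KA
  rcases eq_or_ne i i' with h | h
  · subst h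
    simp [Pi.single_apply]
  · rw [show ((0, Pi.single i' (Pi.single j' 1), 0) : Klat n p).2.1 = Pi.single i' (Pi.single j' 1) from rfl,
      Pi.single_eq_of_ne h]
    simp [h]

section comp
variable (n : ℕ) (p : Fin (n + 1) → ℕ) (k : ℤ) (kk : Fin (n + 1) → ℤ)
  (kij : ∀ i, Fin (p i - 1) → ℤ)

def RHS : Klat n p :=
  k • Kdelta n p + ∑ i, kk i • (Kdelta n p - ∑ j, KA n p i j)
    + ∑ i, ∑ j, kij i j • KA n p i j

lemma pr1_RHS : pr1 n p (RHS n p k kk kij) = 0 := by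
  unfold RHS
  simp

lemma pr3_RHS : pr3 n p (RHS n p k kk kij) = k + ∑ i, kk i := by
  unfold RHS
  simp

lemma pr2_RHS (i : Fin (n+1)) (j : Fin (p i - 1)) :
    pr2 n p i j (RHS n p k kk kij) = -(kk i) + kij i j := by
  unfold RHS
  simp only [map_add, map_sum, map_sub, pr2_smul, pr2_delta, pr2_KA]
  rw [Finset.sum_eq_single i (fun b _ hb => by
      rw [Finset.sum_eq_zero (fun j' _ => by simp [Ne.symm hb])]; ring)
    (by simp)]
  rw [Finset.sum_eq_single i (fun b _ hb => by
      rw [Finset.sum_eq_zero]; intro j' _; simp [Ne.symm hb])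
    (by simp)]
  simp only [dif_pos rfl]
  rw [Finset.sum_eq_single j (fun b _ hb => by simp [Ne.symm hb]) (by simp)]
  rw [Finset.sum_eq_single j (fun b _ hb => by simp [Ne.symm hb]) (by simp)]
  simp

end comp

lemma Keq_iff (n : ℕ) (p : Fin (n + 1) → ℕ)
    (m : (i : Fin (n + 1)) → Fin (p i - 1) → ℤ) (d : ℤ)
    (k : ℤ) (kk : Fin (n + 1) → ℤ) (kij : ∀ i, Fin (p i - 1) → ℤ) :
    (((0 : ℤ), m, d) = RHS n p k kk kij)
      ↔ (∀ i j, m i j = -(kk i) + kij i j) ∧ d = k + ∑ i, kk i := by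
  constructor
  · intro h
    refine ⟨fun i j => ?_, ?_⟩
    · have := congrArg (pr2 n p i j) h
      rwa [pr2_RHS] at this
    · have := congrArg (pr3 n p) h
      rwa [pr3_RHS] at this
  · rintro ⟨h2, h3⟩
    have e1 : (RHS n p k kk kij).1 = 0 := pr1_RHS n p k kk kij
    have e2 : ∀ i j, (RHS n p k kk kij).2.1 i j = -(kk i) + kij i j := pr2_RHS n p k kk kij
    have e3 : (RHS n p k kk kij).2.2 = k + ∑ i, kk i := pr3_RHS n p k kk kij
    refine Prod.ext e1.symm (Prod.ext ?_ ?_)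
    · funext i j
      rw [e2 i j, ← h2 i j]
    · rw [e3, ← h3]


theorem torsion_class_iff (n : ℕ) (p : Fin (n + 1) → ℕ) (hp : ∀ i, 1 ≤ p i)
    (m : (i : Fin (n + 1)) → Fin (p i - 1) → ℤ) (d : ℤ) :
    (∃ (k : ℕ) (kk : Fin (n + 1) → ℕ) (kij : ∀ i, Fin (p i - 1) → ℕ),
        ((0 : ℤ), m, d) = (k : ℤ) • Kdelta n p
          + ∑ i, (kk i : ℤ) • (Kdelta n p - ∑ j, KA n p i j)
          + ∑ i, ∑ j, (kij i j : ℤ) • KA n p i j)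
      ↔ (∑ i, ((Finset.univ.sup fun j => (-(m i j)).toNat : ℕ) : ℤ)) ≤ d := by
  set M : Fin (n + 1) → ℕ := fun i => Finset.univ.sup fun j => (-(m i j)).toNat with hM
  constructor
  · rintro ⟨k, kk, kij, h⟩
    have h' : ((0 : ℤ), m, d) = RHS n p (k : ℤ) (fun i => (kk i : ℤ))
        (fun i j => (kij i j : ℤ)) := h
    obtain ⟨h2, h3⟩ := (Keq_iff n p m d _ _ _).mp h'
    have hMi : ∀ i, (M i : ℤ) ≤ (kk i : ℤ) := by
      intro i
      have : M i ≤ kk i := by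
        apply Finset.sup_le
        intro j _
        rw [Int.toNat_le]
        have := h2 i j
        push_cast
        omega
      exact_mod_cast this
    calc (∑ i, (M i : ℤ)) ≤ ∑ i, (kk i : ℤ) := Finset.sum_le_sum fun i _ => hMi i
      _ ≤ (k : ℤ) + ∑ i, (kk i : ℤ) := le_add_of_nonneg_left (Int.natCast_nonneg k)
      _ = d := h3.symm
  · intro hd
    have hm : ∀ i j, (0 : ℤ) ≤ m i j + M i := by
      intro i j
      have h1 : (-(m i j)).toNat ≤ M i := by rw [hM]; exact Finset.le_sup (f := fun j => (-(m i j)).toNat) (Finset.mem_univ j)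
      have h2 : -(m i j) ≤ ((-(m i j)).toNat : ℤ) := Int.self_le_toNat _
      have : ((-(m i j)).toNat : ℤ) ≤ (M i : ℤ) := by exact_mod_cast h1
      omega
    refine ⟨(d - ∑ i, (M i : ℤ)).toNat, M, fun i j => (m i j + M i).toNat, ?_⟩
    show ((0 : ℤ), m, d) = RHS n p _ _ _
    rw [Keq_iff]
    constructor
    · intro i j
      rw [Int.toNat_of_nonneg (hm i j)]
      ring
    · rw [Int.toNat_of_nonneg (sub_nonneg.mpr hd)]
      ring

end
end

section
/- Let C be a hereditary abelian K-category with tilting object T, and let θ: A' → A'' and φ: B' → B'' be monomorphisms with A', A'', B', B'' ∈ add(T). Then the map κ from the space of pairs (f,g) ∈ Hom(A',B') × Hom(A'',B'') with gθ = φf to Hom(Coker θ, Coker φ), sending (f,g) to the induced map on cokernels, is a surjective K-linear map with kernel isomorphic to Hom(A'', B'); i.e. there is a short exact sequence of vector spaces 0 → Hom(A'',B') → {(f,g) : gθ = φf} → Hom(Coker θ, Coker φ) → 0. -/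
/-!
STATEMENT 13: Let `C` be a hereditary abelian `K`-category with tilting object `T`, and
let `θ : A' ⟶ A''`, `φ : B' ⟶ B''` be monomorphisms with `A', A'', B', B'' ∈ add T`.
Then the map `κ` from `{(f,g) : gθ = φf}` to `Hom(Coker θ, Coker φ)` sending a pair to
the induced map on cokernels is surjective, with kernel the image of
`Hom(A'', B') → {(f,g)}`, `e ↦ (eθ, φe)`, which is injective; i.e. there is a short
exact sequence `0 → Hom(A'',B') → {(f,g) : gθ = φf} → Hom(Coker θ, Coker φ) → 0`.
-/

open CategoryTheory CategoryTheory.Limits Opposite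

attribute [local instance] CategoryTheory.Abelian.hasFiniteBiproducts

noncomputable section

universe v u

variable (K : Type*) [Field K]
variable {C : Type u} [Category.{v} C] [Abelian C] [Linear K C] [EnoughProjectives C]

/-- `X` is a direct summand of a finite direct sum of copies of `T`. -/
def InAdd (T X : C) : Prop :=
  ∃ (n : ℕ) (r : X ⟶ ⨁ fun _ : Fin n => T) (s : (⨁ fun _ : Fin n => T) ⟶ X),
    r ≫ s = 𝟙 X

/- Since `φ` is mono, a pair `(f, g)` induces zero on cokernels exactly when `g` factors through
`φ`. For surjectivity, a map `Coker θ ⟶ Coker φ` is a map `A'' ⟶ Coker φ` killing `θ`, and it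
lifts to `A'' ⟶ B''`: maps out of `T` lift along `B'' ⟶ Coker φ` because `Ext¹(T, B') = 0` by the
tilting property (`B' ∈ add T ⊆ Fac T`), and `A''` is a summand of some `Tⁿ`. The leftover
`θ ≫ g` then factors through `φ`, giving `f`. -/

section

variable {C : Type*} [Category C] [Abelian C]

lemma InAdd.inFac {T X : C} (h : InAdd T X) : InFac T X := by
  obtain ⟨n, r, s, hrs⟩ := h
  have : IsSplitEpi s := ⟨⟨⟨r, hrs⟩⟩⟩
  exact ⟨n, s, inferInstance⟩

lemma InAdd.exists_comp_eq {T X Y Z : C} (hX : InAdd T X) (p : Y ⟶ Z)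
    (hT : ∀ u : T ⟶ Z, ∃ g : T ⟶ Y, g ≫ p = u) (u : X ⟶ Z) : ∃ g : X ⟶ Y, g ≫ p = u := by
  obtain ⟨n, r, s, hrs⟩ := hX
  choose g hg using fun i : Fin n => hT (biproduct.ι (fun _ => T) i ≫ s ≫ u)
  refine ⟨r ≫ biproduct.desc g, ?_⟩
  have hdesc : biproduct.desc g ≫ p = s ≫ u := by
    ext i
    rw [biproduct.ι_desc_assoc, hg]
  rw [Category.assoc, hdesc, ← Category.assoc, hrs, Category.id_comp]

lemma cokernel_map_eq_zero_iff {A' A'' B' B'' : C} (θ : A' ⟶ A'') (φ : B' ⟶ B'') [Mono φ]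
    (f : A' ⟶ B') (g : A'' ⟶ B'') (w : θ ≫ g = f ≫ φ) :
    cokernel.map θ φ f g w = 0 ↔ ∃ e : A'' ⟶ B', f = θ ≫ e ∧ g = e ≫ φ := by
  constructor
  · intro h
    have hg : g ≫ cokernel.π φ = 0 := by simpa using cokernel.π θ ≫= h
    refine ⟨Abelian.monoLift φ g hg, ?_, (Abelian.monoLift_comp φ g hg).symm⟩
    rw [← cancel_mono φ, ← w, Category.assoc, Abelian.monoLift_comp]
  · rintro ⟨e, -, rfl⟩
    ext
    simp

lemma exists_cokernel_map_eq {A' A'' B' B'' : C} (θ : A' ⟶ A'') (φ : B' ⟶ B'') [Mono φ]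
    (hlift : ∀ u : A'' ⟶ cokernel φ, ∃ g : A'' ⟶ B'', g ≫ cokernel.π φ = u)
    (h : cokernel θ ⟶ cokernel φ) :
    ∃ (f : A' ⟶ B') (g : A'' ⟶ B'') (w : θ ≫ g = f ≫ φ), cokernel.map θ φ f g w = h := by
  obtain ⟨g, hg⟩ := hlift (cokernel.π θ ≫ h)
  have hθg : (θ ≫ g) ≫ cokernel.π φ = 0 := by
    rw [Category.assoc, hg, cokernel.condition_assoc, zero_comp]
  refine ⟨Abelian.monoLift φ _ hθg, g, (Abelian.monoLift_comp φ _ hθg).symm, ?_⟩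
  ext
  simpa using hg

end

lemma CategoryTheory.ProjectiveResolution.exists_d_comp_eq_of_isZero_ext1 {X Y : C}
    (hXY : IsZero (ext1 K X Y)) (P : ProjectiveResolution X) (w : P.complex.X 1 ⟶ Y)
    (hw : P.complex.d 2 1 ≫ w = 0) :
    ∃ t : P.complex.X 0 ⟶ Y, P.complex.d 1 0 ≫ t = w := by
  let Hom := P.complex.linearYonedaObj K Y
  have hexact : (Hom.sc' 0 1 2).Exact := by
    rw [← HomologicalComplex.exactAt_iff' Hom 0 1 2 (by simp) (by simp),
      HomologicalComplex.exactAt_iff_isZero_homology]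
    exact hXY.of_iso (P.isoExt 1 Y).symm
  rw [ShortComplex.moduleCat_exact_iff] at hexact
  exact hexact w hw

lemma exists_comp_cokernel_π_eq_of_isZero_ext1 {X B' B'' : C} (hX : IsZero (ext1 K X B'))
    (φ : B' ⟶ B'') [Mono φ] (u : X ⟶ cokernel φ) : ∃ g : X ⟶ B'', g ≫ cokernel.π φ = u := by
  let P := ProjectiveResolution.of X
  let ε : P.complex.X 0 ⟶ X := P.π.f 0
  have hε : P.complex.d 1 0 ≫ ε = 0 := P.complex_d_comp_π_f_zero
  have : Epi ε := inferInstanceAs (Epi (P.π.f 0))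
  let v := Projective.factorThru (ε ≫ u) (cokernel.π φ)
  have hv : v ≫ cokernel.π φ = ε ≫ u := Projective.factorThru_comp _ _
  have hdv : (P.complex.d 1 0 ≫ v) ≫ cokernel.π φ = 0 := by
    rw [Category.assoc, hv, reassoc_of% hε, zero_comp]
  let w := Abelian.monoLift φ _ hdv
  have hw : P.complex.d 2 1 ≫ w = 0 := by
    rw [← cancel_mono φ, Category.assoc, Abelian.monoLift_comp, P.complex.d_comp_d_assoc,
      zero_comp, zero_comp]
  -- `Ext¹(X, B') = 0` makes the cocycle `w` a coboundary, so `v - t ≫ φ` vanishes on `d 1 0`.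
  obtain ⟨t, ht⟩ := P.exists_d_comp_eq_of_isZero_ext1 K hX w hw
  have hdv' : P.complex.d 1 0 ≫ (v - t ≫ φ) = 0 := by
    rw [Preadditive.comp_sub, ← Category.assoc, ht, Abelian.monoLift_comp, sub_self]
  obtain ⟨g, hg⟩ : ∃ g : X ⟶ B'', ε ≫ g = v - t ≫ φ :=
    ⟨_, (CokernelCofork.IsColimit.desc' P.isColimitCokernelCofork _ hdv').2⟩
  refine ⟨g, (cancel_epi ε).1 ?_⟩
  rw [← Category.assoc, hg, Preadditive.sub_comp, hv, Category.assoc, cokernel.condition,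
    comp_zero, sub_zero]

theorem hom_coker_short_exact
    (T : C) (hT : IsTilting K T)
    {A' A'' B' B'' : C} (θ : A' ⟶ A'') (φ : B' ⟶ B'')
    (hA'' : InAdd T A'') (hB' : InAdd T B')
    (hφ : Mono φ) :
    ∃ κ : {fg : (A' ⟶ B') × (A'' ⟶ B'') // θ ≫ fg.2 = fg.1 ≫ φ} →
        (cokernel θ ⟶ cokernel φ),
      (∀ v, cokernel.π θ ≫ κ v = v.val.2 ≫ cokernel.π φ) ∧
      Function.Surjective κ ∧
      (∀ v, κ v = 0 ↔ ∃ e : A'' ⟶ B', v.val.1 = θ ≫ e ∧ v.val.2 = e ≫ φ) ∧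
      Function.Injective (fun e : A'' ⟶ B' =>
        (⟨(θ ≫ e, e ≫ φ), by rw [Category.assoc]⟩ :
          {fg : (A' ⟶ B') × (A'' ⟶ B'') // θ ≫ fg.2 = fg.1 ≫ φ})) := by
  refine ⟨fun v => cokernel.map θ φ v.1.1 v.1.2 v.2, fun v => cokernel.π_desc _ _ _, ?_,
    fun v => cokernel_map_eq_zero_iff θ φ _ _ v.2, ?_⟩
  · intro h
    have hTB' : IsZero (ext1 K T B') := (hT B').1 hB'.inFac
    obtain ⟨f, g, w, rfl⟩ := exists_cokernel_map_eq θ φ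
      (hA''.exists_comp_eq _ (exists_comp_cokernel_π_eq_of_isZero_ext1 K hTB' φ)) h
    exact ⟨⟨(f, g), w⟩, rfl⟩
  · intro e e' h
    exact (cancel_mono φ).1 (congrArg (fun v => v.val.2) h)

end
end
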